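/- A β-redex position C in a λ-term t is the leftmost-outermost β-redex of t if and only if C is an inductive leftmost-outermost (iLOβ) context, where iLOβ contexts are generated by: ⟨·⟩ is iLOβ; if C is iLOβ and C is not an abstraction context λx.D then C t is iLOβ; if C is iLOβ then λx.C is iLOβ; if t is neutral and C is iLOβ then t C is iLOβ. -/

import Mathlib

/-- Pure λ-terms. -/
inductive Term : Type
  | var : ℕ → Term
  | lam : ℕ → Term → Term
  | app : Term → Term → Term
  deriving DecidableEq

/-- Meta-level substitution (assuming Barendregt's convention). -/
def Term.subst (x : ℕ) (u : Term) : Term → Term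
  | var y => if y = x then u else var y
  | lam y t => if y = x then lam y t else lam y (subst x u t)
  | app t r => app (subst x u t) (subst x u r)

/-- β-reduction, closed under all contexts. -/
inductive Beta : Term → Term → Prop
  | beta (x : ℕ) (t u : Term) : Beta (.app (.lam x t) u) (t.subst x u)
  | lam (x : ℕ) {t t' : Term} : Beta t t' → Beta (.lam x t) (.lam x t')
  | appL {t t' : Term} (u : Term) : Beta t t' → Beta (.app t u) (.app t' u)
  | appR (t : Term) {u u' : Term} : Beta u u' → Beta (.app t u) (.app t u')

/-- β-normal terms. -/
def BetaNormal (t : Term) : Prop := ∀ u, ¬ Beta t u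

/-- Neutral terms: β-normal and not an abstraction. -/
def Neutral (t : Term) : Prop := BetaNormal t ∧ ∀ (x : ℕ) (b : Term), t ≠ .lam x b

/-- One-hole contexts of the λ-calculus. -/
inductive Ctx : Type
  | hole : Ctx
  | lam : ℕ → Ctx → Ctx
  | appL : Ctx → Term → Ctx
  | appR : Term → Ctx → Ctx

/-- Plugging a term into a context. -/
def Ctx.plug : Ctx → Term → Term
  | hole, t => t
  | lam x C, t => .lam x (C.plug t)
  | appL C u, t => .app (C.plug t) u
  | appR u C, t => .app u (C.plug t)

/-- Plugging a context into a context. -/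
def Ctx.comp : Ctx → Ctx → Ctx
  | hole, D => D
  | lam x C, D => lam x (C.comp D)
  | appL C u, D => appL (C.comp D) u
  | appR u C, D => appR u (C.comp D)

/-- `C` is a prefix of (a position in) the term `t`. -/
def Ctx.IsPrefix (C : Ctx) (t : Term) : Prop := ∃ u, C.plug u = t

/-- The outside-in order on contexts. -/
inductive PrecO : Ctx → Ctx → Prop
  | root {C : Ctx} : C ≠ .hole → PrecO .hole C
  | closure (E : Ctx) {C D : Ctx} : PrecO C D → PrecO (E.comp C) (E.comp D)

/-- The left-to-right order on contexts. -/
inductive PrecL : Ctx → Ctx → Prop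
  | app {C D : Ctx} {t u : Term} : C.IsPrefix t → D.IsPrefix u →
      PrecL (.appL C u) (.appR t D)
  | closure (E : Ctx) {C D : Ctx} : PrecL C D → PrecL (E.comp C) (E.comp D)

/-- The left-to-right outside-in order. -/
def PrecLO (C D : Ctx) : Prop := PrecO C D ∨ PrecL C D

/-- `C` is the position of a β-redex of `t`. -/
def IsRedexPos (C : Ctx) (t : Term) : Prop :=
  ∃ (x : ℕ) (b a : Term), t = C.plug (.app (.lam x b) a)

/-- Inductive leftmost-outermost (iLOβ) contexts. -/
inductive ILOb : Ctx → Prop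
  | hole : ILOb .hole
  | appL {C : Ctx} (t : Term) : ILOb C → (∀ (x : ℕ) (D : Ctx), C ≠ .lam x D) →
      ILOb (.appL C t)
  | lam (x : ℕ) {C : Ctx} : ILOb C → ILOb (.lam x C)
  | appR {t : Term} {C : Ctx} : Neutral t → ILOb C → ILOb (.appR t C)

/-! ≺_LO-minimality of a redex position `λx.C`, `C u` or `s C` amounts to minimality of `C` in
the corresponding immediate subterm, plus the absence of the redexes outside it that would be
≺_LO-smaller: the root, which is a redex exactly when the function part of the application is an
abstraction, and, for `s C`, every redex of `s`, all of which lie to the left of `C`. Excluding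
these is precisely what the side conditions of iLOβ contexts do. -/

theorem Beta.plug (C : Ctx) {u u' : Term} (h : Beta u u') : Beta (C.plug u) (C.plug u') := by
  induction C with
  | hole => exact h
  | lam x C ih => exact .lam x ih
  | appL C t ih => exact .appL t ih
  | appR t C ih => exact .appR t ih

theorem Beta.exists_isRedexPos {s s' : Term} (h : Beta s s') : ∃ C, IsRedexPos C s := by
  induction h with
  | beta x t u => exact ⟨.hole, x, t, u, rfl⟩
  | lam x _ ih => obtain ⟨C, y, b, a, rfl⟩ := ih; exact ⟨.lam x C, y, b, a, rfl⟩
  | appL u _ ih => obtain ⟨C, y, b, a, rfl⟩ := ih; exact ⟨.appL C u, y, b, a, rfl⟩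
  | appR t _ ih => obtain ⟨C, y, b, a, rfl⟩ := ih; exact ⟨.appR t C, y, b, a, rfl⟩

theorem betaNormal_iff_forall_not_isRedexPos {t : Term} :
    BetaNormal t ↔ ∀ C, ¬ IsRedexPos C t := by
  refine ⟨?_, fun h s hs => ?_⟩
  · rintro hn C ⟨x, b, a, rfl⟩
    exact hn _ (Beta.plug C (.beta x b a))
  · obtain ⟨C, hC⟩ := hs.exists_isRedexPos
    exact h C hC

section IsRedexPos

variable {C : Ctx} {s r : Term}

theorem IsRedexPos.isPrefix (h : IsRedexPos C s) : C.IsPrefix s :=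
  let ⟨_, _, _, h⟩ := h; ⟨_, h.symm⟩

@[simp]
theorem isRedexPos_lam_lam_iff {x y : ℕ} :
    IsRedexPos (.lam x C) (.lam y s) ↔ x = y ∧ IsRedexPos C s := by
  simp [IsRedexPos, Ctx.plug, eq_comm]

@[simp]
theorem isRedexPos_appL_app_iff {u : Term} :
    IsRedexPos (.appL C u) (.app s r) ↔ u = r ∧ IsRedexPos C s := by
  simp [IsRedexPos, Ctx.plug, eq_comm, and_comm]

@[simp]
theorem isRedexPos_appR_app_iff {u : Term} :
    IsRedexPos (.appR u C) (.app s r) ↔ u = s ∧ IsRedexPos C r := by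
  simp [IsRedexPos, Ctx.plug, eq_comm]

@[simp]
theorem isRedexPos_hole_app_iff : IsRedexPos .hole (.app s r) ↔ ∃ x b, s = .lam x b := by
  simp [IsRedexPos, Ctx.plug]

@[simp]
theorem not_isRedexPos_lam_app {x : ℕ} : ¬ IsRedexPos (.lam x C) (.app s r) := by
  simp [IsRedexPos, Ctx.plug]

@[simp]
theorem not_isRedexPos_appL_lam {x : ℕ} {u : Term} : ¬ IsRedexPos (.appL C u) (.lam x s) := by
  simp [IsRedexPos, Ctx.plug]

@[simp]
theorem not_isRedexPos_appR_lam {x : ℕ} {u : Term} : ¬ IsRedexPos (.appR u C) (.lam x s) := by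
  simp [IsRedexPos, Ctx.plug]

@[simp]
theorem not_isRedexPos_hole_lam {x : ℕ} : ¬ IsRedexPos .hole (.lam x s) := by
  simp [IsRedexPos, Ctx.plug]

theorem IsRedexPos.ne_lam (h : IsRedexPos C s) (hC : ∀ x D, C ≠ .lam x D) (x : ℕ)
    (b : Term) : s ≠ .lam x b := by
  obtain ⟨y, c, a, rfl⟩ := h
  cases C <;> simp_all [Ctx.plug]

end IsRedexPos

section Order

variable {C D : Ctx}

theorem PrecO.inv (h : PrecO C D) :
    (C = .hole ∧ D ≠ .hole) ∨
    (∃ x C' D', C = .lam x C' ∧ D = .lam x D' ∧ PrecO C' D') ∨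
    (∃ u C' D', C = .appL C' u ∧ D = .appL D' u ∧ PrecO C' D') ∨
    (∃ s C' D', C = .appR s C' ∧ D = .appR s D' ∧ PrecO C' D') := by
  induction h with
  | root h => exact .inl ⟨rfl, h⟩
  | closure E h ih =>
    cases E with
    | hole => exact ih
    | lam x E => exact .inr <| .inl ⟨x, _, _, rfl, rfl, .closure E h⟩
    | appL E u => exact .inr <| .inr <| .inl ⟨u, _, _, rfl, rfl, .closure E h⟩
    | appR s E => exact .inr <| .inr <| .inr ⟨s, _, _, rfl, rfl, .closure E h⟩

theorem PrecL.inv (h : PrecL C D) :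
    (∃ C' D' t u, C = .appL C' u ∧ D = .appR t D' ∧ C'.IsPrefix t ∧ D'.IsPrefix u) ∨
    (∃ x C' D', C = .lam x C' ∧ D = .lam x D' ∧ PrecL C' D') ∨
    (∃ u C' D', C = .appL C' u ∧ D = .appL D' u ∧ PrecL C' D') ∨
    (∃ s C' D', C = .appR s C' ∧ D = .appR s D' ∧ PrecL C' D') := by
  induction h with
  | app h₁ h₂ => exact .inl ⟨_, _, _, _, rfl, rfl, h₁, h₂⟩
  | closure E h ih =>
    cases E with
    | hole => exact ih
    | lam x E => exact .inr <| .inl ⟨x, _, _, rfl, rfl, .closure E h⟩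
    | appL E u => exact .inr <| .inr <| .inl ⟨u, _, _, rfl, rfl, .closure E h⟩
    | appR s E => exact .inr <| .inr <| .inr ⟨s, _, _, rfl, rfl, .closure E h⟩

namespace PrecLO

theorem hole_left (h : D ≠ .hole) : PrecLO .hole D := .inl (.root h)

theorem comp (E : Ctx) : PrecLO C D → PrecLO (E.comp C) (E.comp D) :=
  Or.imp (.closure E) (.closure E)

theorem not_hole_right : ¬ PrecLO C .hole := by
  rintro (h | h)
  · rcases h.inv with ⟨-, h⟩ | ⟨_, _, _, -, ⟨⟩, -⟩ | ⟨_, _, _, -, ⟨⟩, -⟩ | ⟨_, _, _, -, ⟨⟩, -⟩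
    exact h rfl
  · rcases h.inv with ⟨_, _, _, _, -, ⟨⟩, -⟩ | ⟨_, _, _, -, ⟨⟩, -⟩ | ⟨_, _, _, -, ⟨⟩, -⟩ |
      ⟨_, _, _, -, ⟨⟩, -⟩

theorem not_appR_appL {s u : Term} : ¬ PrecLO (.appR s C) (.appL D u) := by
  rintro (h | h)
  · rcases h.inv with ⟨⟨⟩, -⟩ | ⟨_, _, _, ⟨⟩, -⟩ | ⟨_, _, _, ⟨⟩, -⟩ | ⟨_, _, _, -, ⟨⟩, -⟩
  · rcases h.inv with ⟨_, _, _, _, ⟨⟩, -⟩ | ⟨_, _, _, ⟨⟩, -⟩ | ⟨_, _, _, ⟨⟩, -⟩ |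
      ⟨_, _, _, -, ⟨⟩, -⟩

theorem of_lam {x : ℕ} (h : PrecLO (.lam x C) (.lam x D)) : PrecLO C D := by
  rcases h with h | h
  · rcases h.inv with ⟨⟨⟩, -⟩ | ⟨_, _, _, ⟨⟩, ⟨⟩, h⟩ | ⟨_, _, _, ⟨⟩, -⟩ | ⟨_, _, _, ⟨⟩, -⟩
    exact .inl h
  · rcases h.inv with ⟨_, _, _, _, ⟨⟩, -⟩ | ⟨_, _, _, ⟨⟩, ⟨⟩, h⟩ | ⟨_, _, _, ⟨⟩, -⟩ |
      ⟨_, _, _, ⟨⟩, -⟩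
    exact .inr h

theorem of_appL {u : Term} (h : PrecLO (.appL C u) (.appL D u)) : PrecLO C D := by
  rcases h with h | h
  · rcases h.inv with ⟨⟨⟩, -⟩ | ⟨_, _, _, ⟨⟩, -⟩ | ⟨_, _, _, ⟨⟩, ⟨⟩, h⟩ | ⟨_, _, _, ⟨⟩, -⟩
    exact .inl h
  · rcases h.inv with ⟨_, _, _, _, -, ⟨⟩, -⟩ | ⟨_, _, _, ⟨⟩, -⟩ | ⟨_, _, _, ⟨⟩, ⟨⟩, h⟩ |
      ⟨_, _, _, ⟨⟩, -⟩
    exact .inr h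

theorem of_appR {s : Term} (h : PrecLO (.appR s C) (.appR s D)) : PrecLO C D := by
  rcases h with h | h
  · rcases h.inv with ⟨⟨⟩, -⟩ | ⟨_, _, _, ⟨⟩, -⟩ | ⟨_, _, _, ⟨⟩, -⟩ | ⟨_, _, _, ⟨⟩, ⟨⟩, h⟩
    exact .inl h
  · rcases h.inv with ⟨_, _, _, _, ⟨⟩, -⟩ | ⟨_, _, _, ⟨⟩, -⟩ | ⟨_, _, _, ⟨⟩, -⟩ |
      ⟨_, _, _, ⟨⟩, ⟨⟩, h⟩
    exact .inr h

end PrecLO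

end Order

def IsLOMinimal (C : Ctx) (t : Term) : Prop := ∀ D, IsRedexPos D t → D = C ∨ PrecLO C D

namespace IsLOMinimal

variable {C : Ctx} {s r u : Term}

theorem lam (x : ℕ) (h : IsLOMinimal C s) : IsLOMinimal (.lam x C) (.lam x s) := by
  rintro (_ | ⟨y, D⟩ | _ | _) hD <;> simp only [not_isRedexPos_hole_lam, isRedexPos_lam_lam_iff,
    not_isRedexPos_appL_lam, not_isRedexPos_appR_lam] at hD
  obtain ⟨rfl, hD⟩ := hD
  exact (h D hD).imp (congrArg _) (PrecLO.comp (.lam y .hole))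

theorem of_lam {x : ℕ} (h : IsLOMinimal (.lam x C) (.lam x s)) : IsLOMinimal C s := fun D hD =>
  (h (.lam x D) (by simpa using hD)).imp (fun h => by cases h; rfl) PrecLO.of_lam

theorem appL (h : IsLOMinimal C s) (hC : IsRedexPos C s) (hlam : ∀ x D, C ≠ .lam x D) (u : Term) :
    IsLOMinimal (.appL C u) (.app s u) := by
  rintro (_ | _ | ⟨D, v⟩ | ⟨v, D⟩) hD <;> simp only [isRedexPos_hole_app_iff,
    not_isRedexPos_lam_app, isRedexPos_appL_app_iff, isRedexPos_appR_app_iff] at hD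
  · obtain ⟨x, b, rfl⟩ := hD
    exact absurd rfl (hC.ne_lam hlam x b)
  · obtain ⟨rfl, hD⟩ := hD
    exact (h D hD).imp (congrArg (Ctx.appL · v)) (PrecLO.comp (.appL .hole v))
  · obtain ⟨rfl, hD⟩ := hD
    exact .inr (.inr (.app hC.isPrefix hD.isPrefix))

theorem of_appL (h : IsLOMinimal (.appL C u) (.app s u)) : IsLOMinimal C s := fun D hD =>
  (h (.appL D u) (by simpa using hD)).imp (fun h => by cases h; rfl) PrecLO.of_appL

theorem ne_lam_of_appL (h : IsLOMinimal (.appL C u) (.app s u)) (hC : IsRedexPos C s) :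
    ∀ x D, C ≠ .lam x D := by
  rintro x D rfl
  obtain ⟨y, b, a, rfl⟩ := hC
  rcases h .hole (by simp [Ctx.plug]) with h | h
  · cases h
  · exact h.not_hole_right

theorem appR (hs : Neutral s) (h : IsLOMinimal C r) : IsLOMinimal (.appR s C) (.app s r) := by
  rintro (_ | _ | ⟨D, v⟩ | ⟨v, D⟩) hD <;> simp only [isRedexPos_hole_app_iff,
    not_isRedexPos_lam_app, isRedexPos_appL_app_iff, isRedexPos_appR_app_iff] at hD
  · obtain ⟨x, b, rfl⟩ := hD
    exact absurd rfl (hs.2 x b)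
  · exact absurd hD.2 (betaNormal_iff_forall_not_isRedexPos.1 hs.1 D)
  · obtain ⟨rfl, hD⟩ := hD
    exact (h D hD).imp (congrArg _) (PrecLO.comp (.appR v .hole))

theorem of_appR (h : IsLOMinimal (.appR s C) (.app s r)) : IsLOMinimal C r := fun D hD =>
  (h (.appR s D) (by simpa using hD)).imp (fun h => by cases h; rfl) PrecLO.of_appR

theorem neutral_of_appR (h : IsLOMinimal (.appR s C) (.app s r)) : Neutral s := by
  refine ⟨betaNormal_iff_forall_not_isRedexPos.2 fun D hD => ?_, ?_⟩
  · rcases h (.appL D r) (by simpa using hD) with h | h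
    · cases h
    · exact h.not_appR_appL
  · rintro x b rfl
    rcases h .hole (by simp) with h | h
    · cases h
    · exact h.not_hole_right

theorem ilob : ∀ {C : Ctx} {t : Term}, IsRedexPos C t → IsLOMinimal C t → ILOb C
  | .hole, _, _, _ => .hole
  | .lam x _, _, ⟨_, _, _, rfl⟩, h => .lam x (h.of_lam.ilob ⟨_, _, _, rfl⟩)
  | .appL _ u, _, ⟨_, _, _, rfl⟩, h =>
    .appL u (h.of_appL.ilob ⟨_, _, _, rfl⟩) (h.ne_lam_of_appL ⟨_, _, _, rfl⟩)
  | .appR _ _, _, ⟨_, _, _, rfl⟩, h => .appR h.neutral_of_appR (h.of_appR.ilob ⟨_, _, _, rfl⟩)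

end IsLOMinimal

theorem ILOb.isLOMinimal {C : Ctx} (hI : ILOb C) {t : Term} (hC : IsRedexPos C t) :
    IsLOMinimal C t := by
  induction hI generalizing t with
  | hole => exact fun D _ => (eq_or_ne D .hole).imp id PrecLO.hole_left
  | lam x _ ih =>
    obtain ⟨_, _, _, rfl⟩ := hC
    exact (ih ⟨_, _, _, rfl⟩).lam x
  | appL u _ hlam ih =>
    obtain ⟨_, _, _, rfl⟩ := hC
    exact (ih ⟨_, _, _, rfl⟩).appL ⟨_, _, _, rfl⟩ hlam u
  | appR hs _ ih =>
    obtain ⟨_, _, _, rfl⟩ := hC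
    exact (ih ⟨_, _, _, rfl⟩).appR hs

/-- A β-redex position `C` of `t` is the leftmost-outermost β-redex of `t` (i.e. it is
≺_LO-smaller than any other β-redex position of `t`) iff `C` is an iLOβ context. -/
theorem lo_redex_iff_ilob (t : Term) (C : Ctx) (hC : IsRedexPos C t) :
    (∀ D : Ctx, IsRedexPos D t → D = C ∨ PrecLO C D) ↔ ILOb C :=
  ⟨IsLOMinimal.ilob hC, fun h => h.isLOMinimal hC⟩
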